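/- Let G be a connected graph, x ∈ V(G) with γ(G − x) < γ(G), and let xy be a bridge of G. Then no minimum dominating set of G contains both x and y. -/

import Mathlib

/-- The domination number of a finite simple graph. -/
noncomputable def gamma {V : Type*} [Fintype V] (G : SimpleGraph V) : ℕ :=
  sInf {k | ∃ D : Finset V, D.card = k ∧ ∀ v : V, v ∉ D → ∃ u ∈ D, G.Adj u v}

/-- `D` is a minimum dominating set (γ-set) of `G`. -/
def IsGammaSet {V : Type*} [Fintype V] (G : SimpleGraph V) (D : Finset V) : Prop :=
  (∀ v : V, v ∉ D → ∃ u ∈ D, G.Adj u v) ∧ D.card = gamma G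

lemma gamma_le {V : Type*} [Fintype V] (G : SimpleGraph V) (D : Finset V)
    (hD : ∀ v : V, v ∉ D → ∃ u ∈ D, G.Adj u v) : gamma G ≤ D.card :=
  Nat.sInf_le ⟨D, rfl, hD⟩

lemma exists_gammaSet {V : Type*} [Fintype V] (G : SimpleGraph V) :
    ∃ D : Finset V, D.card = gamma G ∧ ∀ v : V, v ∉ D → ∃ u ∈ D, G.Adj u v := by
  have hne : {k | ∃ D : Finset V, D.card = k ∧ ∀ v : V, v ∉ D → ∃ u ∈ D, G.Adj u v}.Nonempty :=
    ⟨(Finset.univ : Finset V).card, Finset.univ, rfl,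
      fun v hv => absurd (Finset.mem_univ v) hv⟩
  exact Nat.sInf_mem hne

set_option maxHeartbeats 1000000 in
/-- If `G` is connected, `γ(G − x) < γ(G)`, and `xy` is a bridge, then no minimum dominating
set of `G` contains both `x` and `y`. -/
theorem bridge_not_both_in_gamma_set {V : Type*} [Fintype V] [DecidableEq V]
    (G : SimpleGraph V) (hconn : G.Connected) (x y : V)
    (hγx : gamma (G.induce (↑(({x} : Finset V)ᶜ) : Set V)) < gamma G)
    (hbridge : G.IsBridge s(x, y)) :
    ∀ D : Finset V, IsGammaSet G D → ¬ (x ∈ D ∧ y ∈ D) := by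
  classical
  rintro D ⟨hDdom, hDcard⟩ ⟨hxD, hyD⟩
  rw [SimpleGraph.isBridge_iff] at hbridge
  have hnr := hbridge
  have hxy : G.Adj x y := by
    by_contra h
    apply hnr
    have heq : G.deleteEdges {s(x, y)} = G := by
      ext a b
      simp only [SimpleGraph.deleteEdges_adj, Set.mem_singleton_iff]
      constructor
      · exact fun h' => h'.1
      · intro hab
        refine ⟨hab, fun he => h ?_⟩
        rw [← SimpleGraph.mem_edgeSet, ← he]
        exact hab
    rw [heq]
    exact hconn.preconnected x y
  set H : SimpleGraph V := G \ SimpleGraph.fromEdgeSet {s(x, y)} with hH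
  set inA : V → Prop := fun v => H.Reachable x v with hinA
  have hAx : inA x := SimpleGraph.Reachable.refl x
  have hAy : ¬ inA y := hnr
  -- crossing lemma
  have hcross : ∀ u v : V, G.Adj u v → inA u → ¬ inA v → u = x ∧ v = y := by
    intro u v huv hu hv
    by_cases he : s(u, v) = s(x, y)
    · rcases Sym2.eq_iff.mp he with ⟨h1, h2⟩ | ⟨h1, h2⟩
      · exact ⟨h1, h2⟩
      · exact absurd (h2 ▸ hAx) hv
    · exfalso
      have hHadj : H.Adj u v := by
        rw [hH, SimpleGraph.sdiff_adj, SimpleGraph.fromEdgeSet_adj]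
        exact ⟨huv, fun h => he h.1⟩
      exact hv (hu.trans hHadj.reachable)
  -- a gamma set of G - x
  obtain ⟨D', hD'card, hD'dom⟩ :=
    exists_gammaSet (G.induce (↑(({x} : Finset V)ᶜ) : Set V))
  set E : Finset V := D'.image Subtype.val with hE
  have hEcard : E.card = D'.card := Finset.card_image_of_injective _ Subtype.val_injective
  have hEx : ∀ v ∈ E, v ≠ x := by
    intro v hv
    obtain ⟨u, _, rfl⟩ := Finset.mem_image.mp hv
    have := u.2
    simp only [Finset.coe_compl, Finset.coe_singleton, Set.mem_compl_iff,
      Set.mem_singleton_iff] at this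
    exact this
  have hEdom : ∀ v : V, v ≠ x → v ∉ E → ∃ u ∈ E, G.Adj u v := by
    intro v hvx hvE
    have hvmem : v ∈ (↑(({x} : Finset V)ᶜ) : Set V) := by
      simp [hvx]
    have hvD' : (⟨v, hvmem⟩ : (↑(({x} : Finset V)ᶜ) : Set V)) ∉ D' := by
      intro h
      exact hvE (Finset.mem_image.mpr ⟨_, h, rfl⟩)
    obtain ⟨u, huD', hadj⟩ := hD'dom _ hvD'
    exact ⟨u.val, Finset.mem_image.mpr ⟨u, huD', rfl⟩, hadj⟩
  -- card arithmetic
  have hsplitD : (D.filter inA).card + (D.filter (fun v => ¬ inA v)).card = D.card :=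
    Finset.card_filter_add_card_filter_not inA
  have hsplitE : (E.filter inA).card + (E.filter (fun v => ¬ inA v)).card = E.card :=
    Finset.card_filter_add_card_filter_not inA
  have hElt : E.card < D.card := by
    rw [hEcard, hD'card, hDcard]; exact hγx
  have hcases : (E.filter inA).card < (D.filter inA).card ∨
      (E.filter (fun v => ¬ inA v)).card < (D.filter (fun v => ¬ inA v)).card := by
    omega
  rcases hcases with hc | hc
  · -- use E ∩ A and D ∩ B ; x dominated by y ∈ D ∩ B
    set S : Finset V := E.filter inA ∪ D.filter (fun v => ¬ inA v) with hS
    have hSdom : ∀ v : V, v ∉ S → ∃ u ∈ S, G.Adj u v := by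
      intro v hvS
      by_cases hvA : inA v
      · by_cases hvx : v = x
        · refine ⟨y, ?_, hvx ▸ hxy.symm⟩
          exact Finset.mem_union_right _ (Finset.mem_filter.mpr ⟨hyD, hAy⟩)
        · have hvE : v ∉ E := fun h =>
            hvS (Finset.mem_union_left _ (Finset.mem_filter.mpr ⟨h, hvA⟩))
          obtain ⟨u, huE, huv⟩ := hEdom v hvx hvE
          by_cases huA : inA u
          · exact ⟨u, Finset.mem_union_left _ (Finset.mem_filter.mpr ⟨huE, huA⟩), huv⟩
          · exfalso
            obtain ⟨h1, _⟩ := hcross v u huv.symm hvA huA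
            exact hvx h1
      · have hvD : v ∉ D := fun h =>
          hvS (Finset.mem_union_right _ (Finset.mem_filter.mpr ⟨h, hvA⟩))
        obtain ⟨u, huD, huv⟩ := hDdom v hvD
        by_cases huA : inA u
        · obtain ⟨h1, h2⟩ := hcross u v huv huA hvA
          exact absurd (h2 ▸ hyD) hvD
        · exact ⟨u, Finset.mem_union_right _ (Finset.mem_filter.mpr ⟨huD, huA⟩), huv⟩
    have : gamma G ≤ S.card := gamma_le G S hSdom
    have hS2 : S.card ≤ (E.filter inA).card + (D.filter (fun v => ¬ inA v)).card :=
      Finset.card_union_le _ _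
    omega
  · -- use D ∩ A and E ∩ B
    set S : Finset V := D.filter inA ∪ E.filter (fun v => ¬ inA v) with hS
    have hSdom : ∀ v : V, v ∉ S → ∃ u ∈ S, G.Adj u v := by
      intro v hvS
      by_cases hvA : inA v
      · have hvD : v ∉ D := fun h =>
          hvS (Finset.mem_union_left _ (Finset.mem_filter.mpr ⟨h, hvA⟩))
        obtain ⟨u, huD, huv⟩ := hDdom v hvD
        by_cases huA : inA u
        · exact ⟨u, Finset.mem_union_left _ (Finset.mem_filter.mpr ⟨huD, huA⟩), huv⟩
        · exfalso
          obtain ⟨h1, _⟩ := hcross v u huv.symm hvA huA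
          exact hvD (h1 ▸ hxD)
      · have hvx : v ≠ x := fun h => hvA (h ▸ hAx)
        have hvE : v ∉ E := fun h =>
          hvS (Finset.mem_union_right _ (Finset.mem_filter.mpr ⟨h, hvA⟩))
        obtain ⟨u, huE, huv⟩ := hEdom v hvx hvE
        by_cases huA : inA u
        · exfalso
          obtain ⟨_, h2⟩ := hcross u v huv huA hvA
          have := hEx u huE
          obtain ⟨h1, _⟩ := hcross u v huv huA hvA
          exact this h1
        · exact ⟨u, Finset.mem_union_right _ (Finset.mem_filter.mpr ⟨huE, huA⟩), huv⟩
    have : gamma G ≤ S.card := gamma_le G S hSdom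
    have hS2 : S.card ≤ (D.filter inA).card + (E.filter (fun v => ¬ inA v)).card :=
      Finset.card_union_le _ _
    omega
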